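/- In the setting of the empirical likelihood maximization: let ψ₁, …, ψ_n ∈ ℝᵈ, η ∈ ℝᵈ with 1 + ⟨η, ψ_i⟩ > 0 for all i and Σ_{i=1}^n ψ_i/(1 + ⟨η, ψ_i⟩) = 0, and p_i = 1/(n(1 + ⟨η, ψ_i⟩)). If q ∈ ℝⁿ satisfies q_i ≥ 0, Σ q_i = 1, Σ q_i ψ_i = 0 and ∏_{i=1}^n q_i = ∏_{i=1}^n p_i, then q_i = p_i for every i; that is, the maximizing weights are unique. -/

import Mathlib

open RealInnerProductSpace Finset

/-! With `c i = n (1 + ⟪η, ψ i⟫)`, so that `p i = (c i)⁻¹`, put `r i = q i * c i`. Feasibility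
of `q` gives `∑ r i = n`, and `∏ q i = ∏ p i` gives `∏ r i = 1`; equality in AM-GM then forces
every `r i` to be `1`, i.e. `q i = p i`. -/

theorem Finset.eq_one_of_sum_eq_card_of_prod_eq_one {ι : Type*} {s : Finset ι} {r : ι → ℝ}
    (hr : ∀ i ∈ s, 0 ≤ r i) (hsum : ∑ i ∈ s, r i = #s) (hprod : ∏ i ∈ s, r i = 1) :
    ∀ i ∈ s, r i = 1 := by
  intro i hi
  have hcard : (0 : ℝ) < #s := by exact_mod_cast card_pos.mpr ⟨i, hi⟩
  have hmean : ∑ j ∈ s, (#s : ℝ)⁻¹ * r j = 1 := by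
    rw [← mul_sum, hsum, inv_mul_cancel₀ hcard.ne']
  have hgeom : ∏ j ∈ s, r j ^ (#s : ℝ)⁻¹ = ∑ j ∈ s, (#s : ℝ)⁻¹ * r j := by
    rw [Real.finsetProd_rpow s r hr, hprod, Real.one_rpow, hmean]
  have hw : ∑ _j ∈ s, (#s : ℝ)⁻¹ = 1 := by
    rw [sum_const, nsmul_eq_mul, mul_inv_cancel₀ hcard.ne']
  rw [← hmean]
  exact (Real.geom_mean_eq_arith_mean_weighted_iff_of_pos' s (fun _ ↦ (#s : ℝ)⁻¹) r
    (fun _ _ ↦ inv_pos.mpr hcard) hw hr).mp hgeom i hi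

theorem Finset.sum_mul_one_add_inner_eq_one {ι E : Type*} [NormedAddCommGroup E]
    [InnerProductSpace ℝ E] {s : Finset ι} {q : ι → ℝ} {ψ : ι → E} (η : E)
    (hq1 : ∑ i ∈ s, q i = 1) (hqψ : ∑ i ∈ s, q i • ψ i = 0) :
    ∑ i ∈ s, q i * (1 + ⟪η, ψ i⟫) = 1 := by
  have hinner : ∑ i ∈ s, q i * ⟪η, ψ i⟫ = 0 := by
    simp_rw [← real_inner_smul_right, ← inner_sum, hqψ, inner_zero_right]
  simp_rw [mul_add, mul_one, sum_add_distrib, hq1, hinner, add_zero]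

theorem stmt_5_general {n d : ℕ}
    (ψ : Fin n → EuclideanSpace ℝ (Fin d)) (η : EuclideanSpace ℝ (Fin d))
    (hpos : ∀ i, 0 < 1 + ⟪η, ψ i⟫)
    (p : Fin n → ℝ) (hp : ∀ i, p i = ((n : ℝ) * (1 + ⟪η, ψ i⟫))⁻¹)
    (q : Fin n → ℝ) (hq0 : ∀ i, 0 ≤ q i) (hq1 : ∑ i, q i = 1)
    (hqψ : ∑ i, q i • ψ i = 0)
    (heq : ∏ i, q i = ∏ i, p i) :
    ∀ i, q i = p i := by
  intro i
  have hn : (0 : ℝ) < n := by exact_mod_cast Fin.pos i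
  have hc : ∀ j, (0 : ℝ) < n * (1 + ⟪η, ψ j⟫) := fun j ↦ mul_pos hn (hpos j)
  have hsum : ∑ j, q j * (n * (1 + ⟪η, ψ j⟫)) = n := by
    simp_rw [mul_left_comm _ (n : ℝ), ← mul_sum, sum_mul_one_add_inner_eq_one η hq1 hqψ, mul_one]
  have hprod : ∏ j, q j * (n * (1 + ⟪η, ψ j⟫)) = 1 := by
    rw [prod_mul_distrib, heq, ← prod_mul_distrib]
    exact prod_eq_one fun j _ ↦ by rw [hp j, inv_mul_cancel₀ (hc j).ne']
  have hri := eq_one_of_sum_eq_card_of_prod_eq_one (fun j _ ↦ mul_nonneg (hq0 j) (hc j).le)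
    (by rwa [card_univ, Fintype.card_fin]) hprod i (mem_univ i)
  rw [hp i]
  exact eq_inv_of_mul_eq_one_left hri

/-- Uniqueness of the maximizing empirical likelihood weights: if `q`
is a feasible weight vector (`q i ≥ 0`, `∑ q i = 1`, `∑ q i • ψ i = 0`) attaining the
same product as the Lagrangian weights `p i = 1 / (n (1 + ⟨η, ψ i⟩))`, then `q = p`. -/
theorem stmt_5 {n d : ℕ}
    (ψ : Fin n → EuclideanSpace ℝ (Fin d)) (η : EuclideanSpace ℝ (Fin d))
    (hpos : ∀ i, 0 < 1 + ⟪η, ψ i⟫)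
    (hlag : ∑ i, (1 + ⟪η, ψ i⟫)⁻¹ • ψ i = 0)
    (p : Fin n → ℝ) (hp : ∀ i, p i = ((n : ℝ) * (1 + ⟪η, ψ i⟫))⁻¹)
    (q : Fin n → ℝ) (hq0 : ∀ i, 0 ≤ q i) (hq1 : ∑ i, q i = 1)
    (hqψ : ∑ i, q i • ψ i = 0)
    (heq : ∏ i, q i = ∏ i, p i) :
    ∀ i, q i = p i :=
  stmt_5_general ψ η hpos p hp q hq0 hq1 hqψ heq
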